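/- arXiv:2002.00257 — 3 statements merged into one kernel-verified Lean document; each statement's English description precedes it below -/
import Mathlib

section
/- Compositional barrier inequality: Let S₁,…,S_N be subsystems with state sets Xᵢ, transition functions fᵢ : Xᵢ × Uᵢ × Wᵢ → Xᵢ, output functions hᵢ : Xᵢ → Yᵢ (with the interconnection constraint that the internal input wᵢ of subsystem i is composed of outputs h_{ji}(x_j), j ≠ i, and ‖h_{ji}(x_j)‖ ≤ ‖h_j(x_j)‖). Suppose each Bᵢ : Xᵢ → ℝ≥0 satisfies: (a) Bᵢ(xᵢ) ≥ αᵢ(‖hᵢ(xᵢ)‖) for all xᵢ ∈ Xᵢ, and (b) for every xᵢ there exists uᵢ such that for all wᵢ: Bᵢ(fᵢ(xᵢ,uᵢ,wᵢ)) ≤ max{κᵢ(Bᵢ(xᵢ)), γ_{wi}(‖wᵢ‖)}, where ‖wᵢ‖ = max_{j≠i} ‖w_{ij}‖. Define γ_{ii} = κᵢ and γ_{ij} = γ_{wi} ∘ αⱼ⁻¹ for i ≠ j, and assume there are 𝒦∞ functions φᵢ with max_{j} φᵢ⁻¹ ∘ γ_{ij} ∘ φⱼ < Id. Then B(x) :=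 max_i φᵢ⁻¹(Bᵢ(xᵢ)) satisfies: for every x = (x₁,…,x_N) there exists u = (u₁,…,u_N) with B(f(x,u)) ≤ κ(B(x)), where κ := max_{i,j} φᵢ⁻¹ ∘ γ_{ij} ∘ φⱼ < Id, and f is the interconnected transition map. -/
/-!
Put `s := maxₗ φₗ⁻¹ (Bₗ xₗ)`. Then every barrier satisfies `Bₗ xₗ ≤ φₗ s`, hence every output
`‖hₗ xₗ‖ ≤ αₗ⁻¹ (φₗ s)`; feeding these bounds into the local dissipation inequalities bounds
`Bᵢ` at the next state by `maxⱼ γᵢⱼ (φⱼ s)`, and applying the monotone `φᵢ⁻¹` gives the claim.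
-/

open scoped NNReal

/-- A class `𝒦∞` function: continuous, strictly increasing, zero at zero,
tending to infinity. -/
def KInf (f : ℝ≥0 → ℝ≥0) : Prop :=
  Continuous f ∧ StrictMono f ∧ f 0 = 0 ∧ Filter.Tendsto f Filter.atTop Filter.atTop

open Finset Function

section InverseOfStrictMono

variable {α β : Type*} [LinearOrder α] [Preorder β] {f : α → β} {g : β → α}

theorem StrictMono.monotone_of_rightInverse (hf : StrictMono f) (hg : RightInverse g f) :
    Monotone g :=
  (hf.orderIsoOfRightInverse f g hg).symm.monotone

theorem StrictMono.le_apply_of_rightInverse_le (hf : StrictMono f) (hg : RightInverse g f)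
    {a : α} {b : β} (h : g b ≤ a) : b ≤ f a :=
  hg b ▸ hf.monotone h

theorem StrictMono.le_leftInverse_of_apply_le (hf : StrictMono f) (hg : RightInverse g f)
    (hg' : LeftInverse g f) {a : α} {b : β} (h : f a ≤ b) : a ≤ g b :=
  hg' a ▸ hf.monotone_of_rightInverse hg h

end InverseOfStrictMono

theorem max_dissipation_le_sup_gain {ι : Type*} [Fintype ι] [DecidableEq ι]
    (κ γw αinv : ι → ℝ≥0 → ℝ≥0) (γ : ι → ι → ℝ≥0 → ℝ≥0)
    (hκ : ∀ i, Monotone (κ i)) (hγw : ∀ i, Monotone (γw i)) (hγw0 : ∀ i, γw i 0 = 0)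
    (hγdef : ∀ i j, γ i j = if i = j then κ i else γw i ∘ αinv j)
    (i : ι) (t : ι → ℝ≥0) {b w : ℝ≥0} (hb : b ≤ t i)
    (hw : w ≤ (univ.erase i).sup fun j => αinv j (t j)) :
    max (κ i b) (γw i w) ≤ univ.sup fun j => γ i j (t j) := by
  rw [← insert_erase (mem_univ i), sup_insert, hγdef i i, if_pos rfl]
  refine max_le_max (hκ i hb) ?_
  calc γw i w ≤ γw i ((univ.erase i).sup fun j => αinv j (t j)) := hγw i hw
    _ = (univ.erase i).sup fun j => γw i (αinv j (t j)) :=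
      apply_sup_eq_sup_comp_of_linearOrder (γw i) (hγw i) (hγw0 i)
    _ = (univ.erase i).sup fun j => γ i j (t j) :=
      sup_congr rfl fun j hj => by rw [hγdef, if_neg (ne_of_mem_erase hj).symm]; rfl

theorem compositional_barrier_inequality_general
    {ι : Type*} [Fintype ι] [Nonempty ι] [DecidableEq ι]
    (X U W : ι → Type*)
    (f : ∀ i, X i → U i → W i → X i)
    -- interconnection: internal input of subsystem `i` as a function of all states
    (wmap : ∀ i, (∀ j, X j) → W i)
    -- infinity norms of internal inputs and of outputs
    (nW : ∀ i, W i → ℝ≥0) (nH : ∀ i, X i → ℝ≥0)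
    -- `‖wᵢ‖ = max_{j ≠ i} ‖w_{ij}‖` with `w_{ij} = h_{ji}(x_j)` and `‖h_{ji}(x_j)‖ ≤ ‖h_j(x_j)‖`
    (hwbound : ∀ i (x : ∀ j, X j),
      nW i (wmap i x) ≤ (Finset.univ.erase i).sup fun j => nH j (x j))
    (B : ∀ i, X i → ℝ≥0)
    (α κ γw : ι → ℝ≥0 → ℝ≥0) (αinv : ι → ℝ≥0 → ℝ≥0)
    (hα : ∀ i, KInf (α i)) (hκ : ∀ i, KInf (κ i)) (hγw : ∀ i, KInf (γw i))
    (hαinv : ∀ i, Function.LeftInverse (αinv i) (α i) ∧ Function.RightInverse (αinv i) (α i))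
    -- (a) lower bound by the output norm
    (hBa : ∀ i (xi : X i), α i (nH i xi) ≤ B i xi)
    -- (b) local dissipation inequality in max-form
    (hBd : ∀ i (xi : X i), ∃ ui : U i, ∀ wi : W i,
      B i (f i xi ui wi) ≤ max (κ i (B i xi)) (γw i (nW i wi)))
    (φ φinv : ι → ℝ≥0 → ℝ≥0) (hφ : ∀ i, KInf (φ i))
    (hφinv : ∀ i, Function.LeftInverse (φinv i) (φ i) ∧ Function.RightInverse (φinv i) (φ i))
    (γ : ι → ι → ℝ≥0 → ℝ≥0)
    (hγdef : ∀ i j, γ i j = if i = j then κ i else γw i ∘ αinv j)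
    -- small-gain condition:  max_j φᵢ⁻¹ ∘ γ_{ij} ∘ φⱼ < Id
    (hsg : ∀ i s, 0 < s →
      (Finset.univ.sup' Finset.univ_nonempty fun j => φinv i (γ i j (φ j s))) < s) :
    (∀ x : ∀ i, X i, ∃ u : ∀ i, U i,
      (Finset.univ.sup' Finset.univ_nonempty fun i =>
        φinv i (B i (f i (x i) (u i) (wmap i x)))) ≤
      (Finset.univ.sup' Finset.univ_nonempty fun i : ι =>
        Finset.univ.sup' Finset.univ_nonempty fun j : ι =>
          φinv i (γ i j (φ j
            (Finset.univ.sup' Finset.univ_nonempty fun l => φinv l (B l (x l))))))) ∧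
    (∀ s, 0 < s →
      (Finset.univ.sup' Finset.univ_nonempty fun i : ι =>
        Finset.univ.sup' Finset.univ_nonempty fun j : ι => φinv i (γ i j (φ j s))) < s) := by
  refine ⟨fun x => ?_, fun s hs => (sup'_lt_iff _).2 fun i _ => hsg i s hs⟩
  choose u hu using fun i => hBd i (x i)
  refine ⟨u, sup'_le _ _ fun i _ => ?_⟩
  set s := univ.sup' univ_nonempty fun l => φinv l (B l (x l))
  have hB : ∀ l, B l (x l) ≤ φ l s := fun l =>
    (hφ l).2.1.le_apply_of_rightInverse_le (hφinv l).2
      (le_sup' (fun l => φinv l (B l (x l))) (mem_univ l))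
  have hH : ∀ j, nH j (x j) ≤ αinv j (φ j s) := fun j =>
    (hα j).2.1.le_leftInverse_of_apply_le (hαinv j).2 (hαinv j).1 ((hBa j (x j)).trans (hB j))
  have hstep : B i (f i (x i) (u i) (wmap i x)) ≤ univ.sup fun j => γ i j (φ j s) :=
    (hu i _).trans <| max_dissipation_le_sup_gain κ γw αinv γ (fun i => (hκ i).2.1.monotone)
      (fun i => (hγw i).2.1.monotone) (fun i => (hγw i).2.2.1) hγdef i (fun j => φ j s) (hB i)
      ((hwbound i x).trans (sup_mono_fun fun j _ => hH j))
  have hφinv_mono := (hφ i).2.1.monotone_of_rightInverse (hφinv i).2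
  calc φinv i (B i (f i (x i) (u i) (wmap i x)))
      ≤ φinv i (univ.sup' univ_nonempty fun j => γ i j (φ j s)) :=
        hφinv_mono (by rwa [sup'_eq_sup])
    _ = univ.sup' univ_nonempty fun j => φinv i (γ i j (φ j s)) :=
        apply_sup'_eq_sup'_comp univ_nonempty (φinv i) hφinv_mono.map_sup
    _ ≤ _ :=
        le_sup' (fun i => univ.sup' univ_nonempty fun j => φinv i (γ i j (φ j s))) (mem_univ i)

theorem compositional_barrier_inequality
    {ι : Type*} [Fintype ι] [Nonempty ι] [DecidableEq ι]
    (X U W : ι → Type*)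
    (f : ∀ i, X i → U i → W i → X i)
    -- interconnection: internal input of subsystem `i` as a function of all states
    (wmap : ∀ i, (∀ j, X j) → W i)
    -- infinity norms of internal inputs and of outputs
    (nW : ∀ i, W i → ℝ≥0) (nH : ∀ i, X i → ℝ≥0)
    -- `‖wᵢ‖ = max_{j ≠ i} ‖w_{ij}‖` with `w_{ij} = h_{ji}(x_j)` and `‖h_{ji}(x_j)‖ ≤ ‖h_j(x_j)‖`
    (hwbound : ∀ i (x : ∀ j, X j),
      nW i (wmap i x) ≤ (Finset.univ.erase i).sup fun j => nH j (x j))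
    (B : ∀ i, X i → ℝ≥0)
    (α κ γw : ι → ℝ≥0 → ℝ≥0) (αinv : ι → ℝ≥0 → ℝ≥0)
    (hα : ∀ i, KInf (α i)) (hκ : ∀ i, KInf (κ i)) (hγw : ∀ i, KInf (γw i))
    (hαinv : ∀ i, Function.LeftInverse (αinv i) (α i) ∧ Function.RightInverse (αinv i) (α i))
    (hκle : ∀ i s, κ i s ≤ s)
    -- (a) lower bound by the output norm
    (hBa : ∀ i (xi : X i), α i (nH i xi) ≤ B i xi)
    -- (b) local dissipation inequality in max-form
    (hBd : ∀ i (xi : X i), ∃ ui : U i, ∀ wi : W i,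
      B i (f i xi ui wi) ≤ max (κ i (B i xi)) (γw i (nW i wi)))
    (φ φinv : ι → ℝ≥0 → ℝ≥0) (hφ : ∀ i, KInf (φ i))
    (hφinv : ∀ i, Function.LeftInverse (φinv i) (φ i) ∧ Function.RightInverse (φinv i) (φ i))
    (γ : ι → ι → ℝ≥0 → ℝ≥0)
    (hγdef : ∀ i j, γ i j = if i = j then κ i else γw i ∘ αinv j)
    -- small-gain condition:  max_j φᵢ⁻¹ ∘ γ_{ij} ∘ φⱼ < Id
    (hsg : ∀ i s, 0 < s →
      (Finset.univ.sup' Finset.univ_nonempty fun j => φinv i (γ i j (φ j s))) < s) :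
    (∀ x : ∀ i, X i, ∃ u : ∀ i, U i,
      (Finset.univ.sup' Finset.univ_nonempty fun i =>
        φinv i (B i (f i (x i) (u i) (wmap i x)))) ≤
      (Finset.univ.sup' Finset.univ_nonempty fun i : ι =>
        Finset.univ.sup' Finset.univ_nonempty fun j : ι =>
          φinv i (γ i j (φ j
            (Finset.univ.sup' Finset.univ_nonempty fun l => φinv l (B l (x l))))))) ∧
    (∀ s, 0 < s →
      (Finset.univ.sup' Finset.univ_nonempty fun i : ι =>
        Finset.univ.sup' Finset.univ_nonempty fun j : ι => φinv i (γ i j (φ j s))) < s) :=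
  compositional_barrier_inequality_general X U W f wmap nW nH hwbound B α κ γw αinv hα hκ hγw hαinv
    hBa hBd φ φinv hφ hφinv γ hγdef hsg
end

section
/- Additive-to-max conversion of dissipation inequalities: Suppose B : X → ℝ≥0 and for all x ∈ X and all w ∈ W there is an inequality B(f(x,w)) ≤ κ̂(B(x)) + γ̂(‖w‖), where κ̂ ∈ 𝒦∞ with κ̂ < Id (κ̂(s) < s for s > 0, and Id − κ̂ ∈ 𝒦∞). Then for any ψ ∈ 𝒦∞ with ψ < Id, setting κ := Id − (Id − ψ) ∘ (Id − κ̂) and γ := (Id − κ̂)⁻¹ ∘ ψ⁻¹ ∘ γ̂, one has B(f(x,w)) ≤ max{κ(B(x)), γ(‖w‖)} for all x, w; moreover κ ∈ 𝒦∞ and κ ≤ Id. -/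
/-!
Write `ρ := Id - κ̂`. Since `κ̂ ≤ Id` and `ψ ≤ Id`, the gain is `κ = κ̂ + ψ ∘ ρ`, which is
visibly of class `𝒦∞`. Given `B(f(x,w)) ≤ κ̂(a) + g` with `a = B x`, `g = γ̂(‖w‖)`: if
`g ≤ ψ(ρ a)` the bound is `κ(a)`. Otherwise `t := ψ⁻¹ g` satisfies `ρ a < t` and `g ≤ t`, so
`a' := ρ⁻¹ t` exceeds `a` and `κ̂(a) + g ≤ κ̂(a') + ρ(a') = a' = γ(‖w‖)`.
-/

open scoped NNReal

theorem tsub_tsub_tsub_eq {α : Type*} [AddCommMonoid α] [PartialOrder α] [CanonicallyOrderedAdd α]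
    [Sub α] [OrderedSub α] [AddLeftReflectLE α] {a b c : α}
    (hb : b ≤ a) (hc : c ≤ a - b) : a - ((a - b) - c) = b + c := by
  rw [tsub_tsub_assoc tsub_le_self hc, tsub_tsub_cancel_of_le hb]

theorem le_self_of_lt_self_of_pos {f : ℝ≥0 → ℝ≥0} (h0 : f 0 = 0)
    (hlt : ∀ s, 0 < s → f s < s) (s : ℝ≥0) : f s ≤ s := by
  rcases eq_zero_or_pos s with rfl | hs
  · exact h0.le
  · exact (hlt s hs).le

namespace KInf

variable {f g : ℝ≥0 → ℝ≥0}

theorem comp (hf : KInf f) (hg : KInf g) : KInf (f ∘ g) :=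
  ⟨hf.1.comp hg.1, hf.2.1.comp hg.2.1, by simp [Function.comp, hg.2.2.1, hf.2.2.1],
    hf.2.2.2.comp hg.2.2.2⟩

theorem add (hf : KInf f) (hg : KInf g) : KInf (f + g) :=
  ⟨hf.1.add hg.1, hf.2.1.add_monotone hg.2.1.monotone, by simp [hf.2.2.1, hg.2.2.1],
    Filter.tendsto_atTop_mono (fun _ => le_self_add) hf.2.2.2⟩

end KInf

section Dissipation

variable {κ ψ ρinv ψinv : ℝ≥0 → ℝ≥0}

theorem add_le_rightInverse_of_sub_lt (hκ : Monotone κ) (hκle : ∀ s, κ s ≤ s)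
    (hρ : Monotone fun s => s - κ s) (hρri : Function.RightInverse ρinv fun s => s - κ s)
    {a t : ℝ≥0} (ht : a - κ a < t) : κ a + t ≤ ρinv t := by
  have hρt : ρinv t - κ (ρinv t) = t := hρri t
  have ha : a ≤ ρinv t := (hρ.reflect_lt (ht.trans_eq hρt.symm)).le
  calc κ a + t ≤ κ (ρinv t) + (ρinv t - κ (ρinv t)) := add_le_add (hκ ha) hρt.ge
    _ = ρinv t := add_tsub_cancel_of_le (hκle _)

theorem add_le_max_of_rightInverse (hκ : Monotone κ) (hκle : ∀ s, κ s ≤ s)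
    (hρ : Monotone fun s => s - κ s) (hρri : Function.RightInverse ρinv fun s => s - κ s)
    (hψ : Monotone ψ) (hψle : ∀ s, ψ s ≤ s) (hψri : Function.RightInverse ψinv ψ)
    (a g : ℝ≥0) : κ a + g ≤ max (κ a + ψ (a - κ a)) (ρinv (ψinv g)) := by
  rcases le_or_gt g (ψ (a - κ a)) with hg | hg
  · exact le_max_of_le_left (add_le_add_right hg _)
  · have hψt : ψ (ψinv g) = g := hψri g
    have ht : a - κ a < ψinv g := hψ.reflect_lt (hψt.symm ▸ hg)
    calc κ a + g ≤ κ a + ψinv g := add_le_add_right (hψt.symm.trans_le (hψle _)) _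
      _ ≤ ρinv (ψinv g) := add_le_rightInverse_of_sub_lt hκ hκle hρ hρri ht
      _ ≤ _ := le_max_right _ _

end Dissipation

theorem additive_to_max_dissipation_general {X W : Type*}
    (f : X → W → X) (B : X → ℝ≥0) (nW : W → ℝ≥0)
    (κh γh ψ : ℝ≥0 → ℝ≥0)
    (hκh : KInf κh) (hκlt : ∀ s, 0 < s → κh s < s)
    (hIdκ : KInf fun s => s - κh s)
    (hψ : KInf ψ) (hψlt : ∀ s, 0 < s → ψ s < s)
    (ρinv ψinv : ℝ≥0 → ℝ≥0)
    (hρri : Function.RightInverse ρinv fun s => s - κh s)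
    (hψri : Function.RightInverse ψinv ψ)
    (hdiss : ∀ x w, B (f x w) ≤ κh (B x) + γh (nW w)) :
    (∀ x w, B (f x w) ≤
      max (B x - ((B x - κh (B x)) - ψ (B x - κh (B x)))) (ρinv (ψinv (γh (nW w))))) ∧
    KInf (fun s => s - ((s - κh s) - ψ (s - κh s))) ∧
    (∀ s, s - ((s - κh s) - ψ (s - κh s)) ≤ s) := by
  have hκle := le_self_of_lt_self_of_pos hκh.2.2.1 hκlt
  have hψle := le_self_of_lt_self_of_pos hψ.2.2.1 hψlt
  have hgain : (fun s => s - ((s - κh s) - ψ (s - κh s))) = κh + ψ ∘ fun s => s - κh s :=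
    funext fun s => tsub_tsub_tsub_eq (hκle s) (hψle _)
  refine ⟨fun x w => ?_, hgain ▸ hκh.add (hψ.comp hIdκ), fun s => tsub_le_self⟩
  rw [tsub_tsub_tsub_eq (hκle _) (hψle _)]
  exact (hdiss x w).trans <| add_le_max_of_rightInverse hκh.2.1.monotone hκle
    hIdκ.2.1.monotone hρri hψ.2.1.monotone hψle hψri _ _

theorem additive_to_max_dissipation {X W : Type*}
    (f : X → W → X) (B : X → ℝ≥0) (nW : W → ℝ≥0)
    (κh γh ψ : ℝ≥0 → ℝ≥0)
    (hκh : KInf κh) (hκlt : ∀ s, 0 < s → κh s < s)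
    (hIdκ : KInf fun s => s - κh s)
    (hψ : KInf ψ) (hψlt : ∀ s, 0 < s → ψ s < s)
    (hIdψ : KInf fun s => s - ψ s)
    (γhK : KInf γh)
    (ρinv ψinv : ℝ≥0 → ℝ≥0)
    (hρli : Function.LeftInverse ρinv fun s => s - κh s)
    (hρri : Function.RightInverse ρinv fun s => s - κh s)
    (hψli : Function.LeftInverse ψinv ψ)
    (hψri : Function.RightInverse ψinv ψ)
    (hdiss : ∀ x w, B (f x w) ≤ κh (B x) + γh (nW w)) :
    (∀ x w, B (f x w) ≤
      max (B x - ((B x - κh (B x)) - ψ (B x - κh (B x)))) (ρinv (ψinv (γh (nW w))))) ∧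
    KInf (fun s => s - ((s - κh s) - ψ (s - κh s))) ∧
    (∀ s, s - ((s - κh s) - ψ (s - κh s)) ≤ s) :=
  additive_to_max_dissipation_general f B nW κh γh ψ hκh hκlt hIdκ hψ hψlt ρinv ψinv hρri hψri hdiss
end

section
/- For nonnegative reals a, b and 𝒦∞ functions κ̂, ψ with κ̂(s) < s and ψ(s) < s for all s > 0 such that Id − κ̂ and Id − ψ are strictly increasing: κ̂(a) + b ≤ max{ a − (Id − ψ)((Id − κ̂)(a)), ((Id − κ̂)⁻¹ ∘ ψ⁻¹)(b) }. -/
/-!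
Put `u = a - κ̂ a`. If `b ≤ ψ u`, then `κ̂ a + b ≤ κ̂ a + ψ u`, which is exactly the first entry of
the maximum. Otherwise `ψ u < b = ψ c` with `c = ψ⁻¹ b`, so `u < c`; writing `c = d - κ̂ d` gives
`a < d` because `Id - κ̂` is increasing, and then `κ̂ a + b ≤ κ̂ d + c = d`, the second entry.
-/

open scoped NNReal

section

variable {α : Type*} [AddCommMonoid α] [PartialOrder α] [CanonicallyOrderedAdd α]

theorem le_self_of_lt_self {f : α → α} (h0 : f 0 = 0)
    (hlt : ∀ s, 0 < s → f s < s) (s : α) : f s ≤ s := by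
  rcases eq_zero_or_pos s with rfl | hs
  · exact h0.le
  · exact (hlt s hs).le

variable [Sub α] [OrderedSub α]

theorem tsub_tsub_tsub_eq_add [AddLeftReflectLE α] {a k p : α} (hk : k ≤ a) (hp : p ≤ a - k) :
    a - (a - k - p) = k + p := by
  rw [tsub_tsub, tsub_tsub_cancel_of_le ((le_tsub_iff_left hk).mp hp)]

theorem add_le_of_tsub_eq {κ : α → α} (hκ : Monotone κ) {a c d p : α} (hpc : p ≤ c)
    (hκd : κ d ≤ d) (hdc : d - κ d = c) (had : a ≤ d) : κ a + p ≤ d :=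
  calc κ a + p ≤ κ d + (d - κ d) := add_le_add (hκ had) (hdc ▸ hpc)
    _ = d := add_tsub_cancel_of_le hκd

end

theorem additive_to_max_pointwise_general
    (a b : ℝ≥0) (κh ψ : ℝ≥0 → ℝ≥0)
    (hκmono : StrictMono κh) (hκ0 : κh 0 = 0)
    (hψmono : StrictMono ψ) (hψ0 : ψ 0 = 0)
    (hκlt : ∀ s, 0 < s → κh s < s) (hψlt : ∀ s, 0 < s → ψ s < s)
    (hIdκ : StrictMono fun s => s - κh s)
    (ρinv ψinv : ℝ≥0 → ℝ≥0)
    (hρri : Function.RightInverse ρinv fun s => s - κh s)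
    (hψri : Function.RightInverse ψinv ψ) :
    κh a + b ≤ max (a - ((a - κh a) - ψ (a - κh a))) (ρinv (ψinv b)) := by
  have hκle := le_self_of_lt_self hκ0 hκlt
  have hψle := le_self_of_lt_self hψ0 hψlt
  set u := a - κh a
  rcases le_or_gt b (ψ u) with hb | hb
  · refine le_max_of_le_left ?_
    rw [tsub_tsub_tsub_eq_add (hκle a) (hψle u)]
    exact add_le_add_right hb _
  · refine le_max_of_le_right ?_
    set c := ψinv b
    set d := ρinv c
    have hψc : ψ c = b := hψri b
    have hdc : d - κh d = c := hρri c
    have huc : u < c := hψmono.lt_iff_lt.mp (by rwa [hψc])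
    have had : a < d := hIdκ.lt_iff_lt.mp (by rwa [← hdc] at huc)
    rw [← hψc]
    exact add_le_of_tsub_eq hκmono.monotone (hψle c) (hκle d) hdc had.le

theorem additive_to_max_pointwise
    (a b : ℝ≥0) (κh ψ : ℝ≥0 → ℝ≥0)
    (hκcont : Continuous κh) (hκmono : StrictMono κh) (hκ0 : κh 0 = 0)
    (hκtop : Filter.Tendsto κh Filter.atTop Filter.atTop)
    (hψcont : Continuous ψ) (hψmono : StrictMono ψ) (hψ0 : ψ 0 = 0)
    (hψtop : Filter.Tendsto ψ Filter.atTop Filter.atTop)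
    (hκlt : ∀ s, 0 < s → κh s < s) (hψlt : ∀ s, 0 < s → ψ s < s)
    (hIdκ : StrictMono fun s => s - κh s) (hIdψ : StrictMono fun s => s - ψ s)
    (ρinv ψinv : ℝ≥0 → ℝ≥0)
    (hρli : Function.LeftInverse ρinv fun s => s - κh s)
    (hρri : Function.RightInverse ρinv fun s => s - κh s)
    (hψli : Function.LeftInverse ψinv ψ)
    (hψri : Function.RightInverse ψinv ψ) :
    κh a + b ≤ max (a - ((a - κh a) - ψ (a - κh a))) (ρinv (ψinv b)) :=
  additive_to_max_pointwise_general a b κh ψ hκmono hκ0 hψmono hψ0 hκlt hψlt hIdκ ρinv ψinv hρri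
    hψri
end
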